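/- arXiv:1502.05092 — 4 statements merged into one kernel-verified Lean document; each statement's English description precedes it below -/
import Mathlib

section
/- Let A, B ∈ U(m) satisfy AB = γBA where γ is a primitive q-th root of unity. Then q divides m. -/
/-- If `A, B ∈ U(m)` satisfy `A * B = γ • (B * A)` with `γ` a primitive `q`-th root of
unity, then `q` divides `m`. -/
theorem primitive_root_commutator_dvd (m q : ℕ) (A B : Matrix (Fin m) (Fin m) ℂ)
    (hA : A ∈ Matrix.unitaryGroup (Fin m) ℂ) (hB : B ∈ Matrix.unitaryGroup (Fin m) ℂ)
    (γ : ℂ) (hγ : IsPrimitiveRoot γ q)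
    (h : A * B = γ • (B * A)) :
    q ∣ m := by
  have hdet := congrArg Matrix.det h
  rw [Matrix.det_mul, Matrix.det_smul, Matrix.det_mul, Fintype.card_fin] at hdet
  have hAdet : A.det ≠ 0 := by
    intro h0
    have := hA.1
    have : (star A * A).det = (1 : Matrix (Fin m) (Fin m) ℂ).det := by rw [this]
    rw [Matrix.det_mul, h0, mul_zero, Matrix.det_one] at this
    exact zero_ne_one this
  have hBdet : B.det ≠ 0 := by
    intro h0
    have := hB.1
    have : (star B * B).det = (1 : Matrix (Fin m) (Fin m) ℂ).det := by rw [this]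
    rw [Matrix.det_mul, h0, mul_zero, Matrix.det_one] at this
    exact zero_ne_one this
  have hpow : γ ^ m = 1 := by
    have hne : B.det * A.det ≠ 0 := mul_ne_zero hBdet hAdet
    have h1 : γ ^ m * (B.det * A.det) = 1 * (B.det * A.det) := by
      rw [one_mul, ← hdet]; ring
    exact mul_right_cancel₀ hne h1
  exact hγ.dvd_of_pow_eq_one m hpow
end

section
/- Let Γ be the central extension 1 → ℤ → Γ → ℤ² → 1 with k-invariant e₁*∧e₂* (the integral Heisenberg group, with presentation ⟨a₁,a₂,x : [a₁,a₂] = x, x central⟩). A homomorphism f: Γ → U(m) sends x to a unitary matrix X whose eigenvalues are all roots of unity; moreover if λ is an eigenvalue of X with eigenspace of dimension k, then λ^k = 1. -/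
/-! The commutator `[A₁, A₂] = X` restricts to `λ • id` on each eigenspace `E_λ` of `X` (which `A₁`
and `A₂` preserve since they commute with `X`), so `A₁ A₂ = λ A₂ A₁` on `E_λ`. Taking determinants
gives `λ ^ dim E_λ = 1`. -/

open scoped commutatorElement

/-- The relations of the integral Heisenberg group `⟨a₁, a₂, x : [a₁,a₂] = x, x central⟩`,
with generators `0 ↦ a₁`, `1 ↦ a₂`, `2 ↦ x`. -/
def heisenbergRels : Set (FreeGroup (Fin 3)) :=
  {⁅FreeGroup.of (0 : Fin 3), FreeGroup.of (1 : Fin 3)⁆ * (FreeGroup.of (2 : Fin 3))⁻¹,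
   ⁅FreeGroup.of (2 : Fin 3), FreeGroup.of (0 : Fin 3)⁆,
   ⁅FreeGroup.of (2 : Fin 3), FreeGroup.of (1 : Fin 3)⁆}

/-- The integral Heisenberg group, i.e. the central extension `1 → ℤ → Γ₁ → ℤ² → 1` with
k-invariant `e₁* ∧ e₂*`. -/
def HeisenbergGroup : Type := PresentedGroup heisenbergRels

instance : Group HeisenbergGroup := by unfold HeisenbergGroup; infer_instance

namespace Module.End

theorem pow_finrank_eq_one_of_mul_eq_smul_mul {R M : Type*} [CommRing R] [AddCommGroup M]
    [Module R M] [Module.Free R M] {a b : End R M} (ha : IsUnit a) (hb : IsUnit b) {c : R}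
    (h : a * b = c • (b * a)) : c ^ finrank R M = 1 := by
  have hdet := congrArg LinearMap.det h
  rw [LinearMap.det_smul, map_mul, map_mul, mul_comm (LinearMap.det b)] at hdet
  exact ((ha.map LinearMap.det).mul (hb.map LinearMap.det)).mul_eq_right.mp hdet.symm

variable {K V : Type*} [Field K] [AddCommGroup V] [Module K V] [FiniteDimensional K V]

theorem isUnit_restrict {a : End K V} (ha : IsUnit a) {p : Submodule K V}
    (hp : ∀ v ∈ p, a v ∈ p) : IsUnit (a.restrict hp) := by
  rw [LinearMap.isUnit_iff_ker_eq_bot, LinearMap.ker_eq_bot, LinearMap.injective_restrict_iff,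
    LinearMap.ker_eq_bot.mpr ((isUnit_iff a).mp ha).injective]
  exact disjoint_bot_right

theorem pow_finrank_eigenspace_eq_one_of_mul_eq_mul_mul {a b x : End K V} (ha : IsUnit a)
    (hb : IsUnit b) (hxa : Commute x a) (hxb : Commute x b) (h : a * b = x * (b * a)) (μ : K) :
    μ ^ finrank K (x.eigenspace μ) = 1 := by
  have hE : ∀ {c : End K V}, Commute x c → ∀ v ∈ x.eigenspace μ, c v ∈ x.eigenspace μ :=
    fun hc => mapsTo_genEigenspace_of_comm hc μ 1
  refine pow_finrank_eq_one_of_mul_eq_smul_mul (isUnit_restrict ha (hE hxa))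
    (isUnit_restrict hb (hE hxb)) (LinearMap.ext fun v => Subtype.ext ?_)
  have hbav : b (a v) ∈ x.eigenspace μ := hE hxb _ (hE hxa _ v.2)
  calc a (b v) = x (b (a v)) := LinearMap.congr_fun h v
    _ = μ • b (a v) := mem_eigenspace_iff.mp hbav

end Module.End

namespace HeisenbergGroup

def a₁ : HeisenbergGroup := PresentedGroup.of 0

def a₂ : HeisenbergGroup := PresentedGroup.of 1

def x : HeisenbergGroup := PresentedGroup.of 2

lemma a₁_mul_a₂ : a₁ * a₂ = x * (a₂ * a₁) := by
  have h : ⁅a₁, a₂⁆ * x⁻¹ = 1 := PresentedGroup.one_of_mem <| Set.mem_insert _ _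
  rw [mul_inv_eq_one, commutatorElement_def] at h
  rw [← h]
  group

lemma commute_x_a₁ : Commute x a₁ :=
  commutatorElement_eq_one_iff_commute.mp <| PresentedGroup.one_of_mem <|
    Set.mem_insert_of_mem _ <| Set.mem_insert _ _

lemma commute_x_a₂ : Commute x a₂ :=
  commutatorElement_eq_one_iff_commute.mp <| PresentedGroup.one_of_mem <|
    Set.mem_insert_of_mem _ <| Set.mem_insert_of_mem _ rfl

theorem pow_finrank_eigenspace_x_eq_one {K V : Type*} [Field K] [AddCommGroup V]
    [Module K V] [FiniteDimensional K V] (ρ : HeisenbergGroup →* Module.End K V) (μ : K) :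
    μ ^ Module.finrank K ((ρ x).eigenspace μ) = 1 :=
  Module.End.pow_finrank_eigenspace_eq_one_of_mul_eq_mul_mul
    ((Group.isUnit a₁).map ρ) ((Group.isUnit a₂).map ρ) (commute_x_a₁.map ρ)
    (commute_x_a₂.map ρ) (by simpa only [map_mul] using congrArg ρ a₁_mul_a₂) μ

end HeisenbergGroup

/-- A homomorphism `f : Γ₁ → U(m)` from the integral Heisenberg group sends the central
generator `x` to a unitary matrix `X` all of whose eigenvalues are roots of unity;
moreover if `λ` is an eigenvalue of `X` with eigenspace of dimension `k` then `λ^k = 1`. -/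
theorem heisenberg_central_eigenvalues (m : ℕ)
    (f : HeisenbergGroup →* Matrix.unitaryGroup (Fin m) ℂ)
    (X : Matrix (Fin m) (Fin m) ℂ)
    (hXf : X = ((f (PresentedGroup.of (2 : Fin 3) : PresentedGroup heisenbergRels)) :
      Matrix (Fin m) (Fin m) ℂ))
    (lam : ℂ) (hlam : Module.End.HasEigenvalue (Matrix.mulVecLin X) lam) :
    lam ^ (Module.finrank ℂ (Module.End.eigenspace (Matrix.mulVecLin X) lam)) = 1 ∧
    ∃ N : ℕ, 0 < N ∧ lam ^ N = 1 := by
  subst hXf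
  have hpow := HeisenbergGroup.pow_finrank_eigenspace_x_eq_one
    ((Matrix.toLinAlgEquiv' : Matrix (Fin m) (Fin m) ℂ ≃ₐ[ℂ] _).toRingEquiv.toMonoidHom.comp
      ((unitary _).subtype.comp f)) lam
  exact ⟨hpow, _, Nat.pos_of_ne_zero (mt Submodule.finrank_eq_zero.mp hlam), hpow⟩
end

section
/- For t ≥ 2, let μ_k = k^t. Then the coefficient of x^m in ∏_{k≥1}(1-x^{μ_k})^{-Φ(k)} equals 1 for 1 ≤ m ≤ 2^t − 1, equals 2 for 2^t ≤ m ≤ 2^{t+1} − 1, and is at least 3 for m ≥ 2^{t+1}. -/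
/-- The coefficient of `x^m` in `∏_{k ≥ 1} (1 - x^{k^t})^{-Φ(k)}` (factors with `k > m`
have `k^t ≥ k > m` and do not affect this coefficient). -/
noncomputable def gfCoeff (t m : ℕ) : ℚ :=
  PowerSeries.coeff (R := ℚ) m
    (∏ k ∈ Finset.Icc 1 m,
      ((1 - (PowerSeries.X : PowerSeries ℚ) ^ (k ^ t)) ^ Nat.totient k)⁻¹)

/-! For `k ≥ 1` the factor `(1 - x^{k^t})^{-Φ(k)} = (∑ⱼ x^{j k^t})^{Φ(k)}` is `≡ 1 mod x^{k^t}` and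
has nonnegative coefficients. Hence for `m < 3^t` only the factors `k = 1, 2` matter, and the
`x^m`-coefficient of `1/((1-x)(1-x^{2^t}))` is `⌊m/2^t⌋ + 1`; for larger `m` the other factors can
only increase the coefficient. As `2^{t+1} ≤ 3^t` for `t ≥ 2`, this gives the three ranges. -/

open PowerSeries Finset

theorem dvd_prod_sub_one {R ι : Type*} [CommRing R] {a : R} {s : Finset ι} {f : ι → R}
    (h : ∀ i ∈ s, a ∣ f i - 1) : a ∣ ∏ i ∈ s, f i - 1 :=
  prod_induction f (fun x => a ∣ x - 1)
    (fun x y hx hy => by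
      rw [show x * y - 1 = x * (y - 1) + (x - 1) by ring]
      exact dvd_add (hy.mul_left x) hx)
    (by simp) h

theorem Nat.card_filter_dvd_range_succ (m n : ℕ) : #{j ∈ range (m + 1) | n ∣ j} = m / n + 1 := by
  rw [range_eq_Ico, ← Finset.insert_Ico_add_one_left_eq_Ico (Nat.succ_pos m), filter_insert,
    if_pos (dvd_zero n), card_insert_of_notMem (by simp), zero_add, ← Nat.card_multiples' m n]
  congr 2
  ext j
  simp only [mem_filter, mem_Ico, mem_range, Nat.lt_succ_iff, Nat.one_le_iff_ne_zero]
  tauto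

namespace PowerSeries

variable {R : Type*}

section CommRing

variable [CommRing R]

noncomputable def invOneSubXPow (n : ℕ) : R⟦X⟧ :=
  mk fun j => if n ∣ j then 1 else 0

@[simp]
theorem invOneSubXPow_one : (invOneSubXPow 1 : R⟦X⟧) = mk 1 := by
  ext j; simp [invOneSubXPow]

@[simp]
theorem constantCoeff_invOneSubXPow (n : ℕ) : constantCoeff (invOneSubXPow n : R⟦X⟧) = 1 := by
  simp [invOneSubXPow, ← coeff_zero_eq_constantCoeff_apply]

theorem X_pow_mul_invOneSubXPow {n : ℕ} (hn : 0 < n) :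
    X ^ n * invOneSubXPow n = (invOneSubXPow n - 1 : R⟦X⟧) := by
  ext j
  rw [coeff_X_pow_mul', map_sub, coeff_one]
  simp only [invOneSubXPow, coeff_mk]
  rcases lt_or_ge j n with hjn | hnj
  · rcases eq_or_ne j 0 with rfl | hj0
    · simp [hn.ne']
    · simp [hjn.not_ge, hj0, Nat.not_dvd_of_pos_of_lt (Nat.pos_of_ne_zero hj0) hjn]
  · obtain ⟨i, rfl⟩ := Nat.exists_eq_add_of_le hnj
    simp [hn.ne', Nat.dvd_add_self_left]

theorem one_sub_X_pow_mul_invOneSubXPow {n : ℕ} (hn : 0 < n) :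
    (1 - X ^ n) * invOneSubXPow n = (1 : R⟦X⟧) := by
  rw [sub_mul, X_pow_mul_invOneSubXPow hn]
  ring

theorem X_pow_dvd_invOneSubXPow_pow_sub_one {n : ℕ} (hn : 0 < n) (p : ℕ) :
    X ^ n ∣ (invOneSubXPow n ^ p - 1 : R⟦X⟧) := by
  have h : X ^ n ∣ (invOneSubXPow n - 1 : R⟦X⟧) := ⟨_, (X_pow_mul_invOneSubXPow hn).symm⟩
  simpa using h.trans (sub_dvd_pow_sub_pow _ 1 p)

theorem coeff_mk_one_mul_invOneSubXPow (m n : ℕ) :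
    coeff m (mk 1 * invOneSubXPow n : R⟦X⟧) = (m / n + 1 : ℕ) := by
  rw [mul_comm, coeff_mul, Nat.sum_antidiagonal_eq_sum_range_succ_mk]
  simp only [invOneSubXPow, coeff_mk, Pi.one_apply, mul_one]
  rw [sum_boole, Nat.card_filter_dvd_range_succ]

theorem coeff_mul_of_X_pow_dvd_sub_one {m : ℕ} {f g : R⟦X⟧} (hg : X ^ (m + 1) ∣ g - 1) :
    coeff m (f * g) = coeff m f := by
  have := X_pow_dvd_iff.mp (Dvd.dvd.mul_left hg f) m m.lt_succ_self
  rwa [mul_sub, mul_one, map_sub, sub_eq_zero] at this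

theorem coeff_prod_of_subset {ι : Type*} [DecidableEq ι] {m : ℕ} {s t : Finset ι}
    {f : ι → R⟦X⟧} (hts : t ⊆ s) (hf : ∀ i ∈ s \ t, X ^ (m + 1) ∣ f i - 1) :
    coeff m (∏ i ∈ s, f i) = coeff m (∏ i ∈ t, f i) := by
  rw [← prod_sdiff hts, mul_comm, coeff_mul_of_X_pow_dvd_sub_one (dvd_prod_sub_one hf)]

end CommRing

theorem inv_one_sub_X_pow_pow {k : Type*} [Field k] {n : ℕ} (hn : 0 < n) (p : ℕ) :
    ((1 - X ^ n : k⟦X⟧) ^ p)⁻¹ = invOneSubXPow n ^ p := by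
  rw [PowerSeries.inv_eq_iff_mul_eq_one, ← mul_pow, mul_comm, one_sub_X_pow_mul_invOneSubXPow hn,
    one_pow]
  simp [hn.ne']

section Nonneg

variable [CommRing R] [PartialOrder R] [IsOrderedRing R]

variable (R) in
def nonnegCoeffSubmonoid : Submonoid R⟦X⟧ where
  carrier := {f | ∀ j, 0 ≤ coeff j f}
  mul_mem' {f g} hf hg j := by
    rw [coeff_mul]
    exact sum_nonneg fun p _ => mul_nonneg (hf p.1) (hg p.2)
  one_mem' j := by
    rw [coeff_one]
    split_ifs <;> simp

theorem invOneSubXPow_mem_nonnegCoeffSubmonoid (n : ℕ) :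
    invOneSubXPow n ∈ nonnegCoeffSubmonoid R := by
  intro j
  simp only [invOneSubXPow, coeff_mk]
  split_ifs <;> simp

theorem coeff_le_coeff_mul {m : ℕ} {f g : R⟦X⟧} (hf : f ∈ nonnegCoeffSubmonoid R)
    (hg : g ∈ nonnegCoeffSubmonoid R) (hg0 : constantCoeff g = 1) :
    coeff m f ≤ coeff m (f * g) := by
  rw [coeff_mul]
  simpa [coeff_zero_eq_constantCoeff_apply, hg0] using
    single_le_sum (fun p _ => mul_nonneg (hf p.1) (hg p.2))
      (f := fun p => coeff p.1 f * coeff p.2 g) (show (m, 0) ∈ antidiagonal m by simp)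

theorem coeff_prod_le_of_subset {ι : Type*} [DecidableEq ι] {m : ℕ} {s t : Finset ι}
    {f : ι → R⟦X⟧} (hts : t ⊆ s) (hf : ∀ i ∈ s, f i ∈ nonnegCoeffSubmonoid R)
    (hf0 : ∀ i ∈ s \ t, constantCoeff (f i) = 1) :
    coeff m (∏ i ∈ t, f i) ≤ coeff m (∏ i ∈ s, f i) := by
  rw [← prod_sdiff hts, mul_comm]
  refine coeff_le_coeff_mul (prod_mem fun i hi => hf i (hts hi))
    (prod_mem fun i hi => hf i (sdiff_subset hi)) ?_
  rw [map_prod]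
  exact prod_eq_one hf0

end Nonneg

end PowerSeries

theorem Nat.two_pow_succ_le_three_pow {t : ℕ} (ht : 2 ≤ t) : 2 ^ (t + 1) ≤ 3 ^ t := by
  induction t, ht using Nat.le_induction with
  | base => norm_num
  | succ t _ ih => rw [pow_succ, pow_succ 3]; omega

section GfCoeff

variable {t m : ℕ}

theorem gfCoeff_eq_coeff_prod (t m : ℕ) :
    gfCoeff t m = coeff m (∏ k ∈ Icc 1 m, invOneSubXPow (k ^ t) ^ k.totient : ℚ⟦X⟧) := by
  rw [gfCoeff]
  congr 1
  exact prod_congr rfl fun k hk => inv_one_sub_X_pow_pow (pow_pos (mem_Icc.mp hk).1 t) _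

theorem gfCoeff_eq_coeff_prod_of_lt_pow {n : ℕ} (hnm : n ≤ m) (hm : m < (n + 1) ^ t) :
    gfCoeff t m = coeff m (∏ k ∈ Icc 1 n, invOneSubXPow (k ^ t) ^ k.totient : ℚ⟦X⟧) := by
  rw [gfCoeff_eq_coeff_prod, coeff_prod_of_subset (Icc_subset_Icc_right hnm)]
  intro k hk
  obtain ⟨⟨hk1, -⟩, hkn⟩ : (1 ≤ k ∧ k ≤ m) ∧ ¬(1 ≤ k ∧ k ≤ n) := by simpa using hk
  have hmk : m + 1 ≤ k ^ t := hm.trans_le (Nat.pow_le_pow_left (by omega) t)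
  exact (pow_dvd_pow X hmk).trans (X_pow_dvd_invOneSubXPow_pow_sub_one (pow_pos hk1 t) _)

theorem coeff_prod_le_gfCoeff {n : ℕ} (hnm : n ≤ m) :
    coeff m (∏ k ∈ Icc 1 n, invOneSubXPow (k ^ t) ^ k.totient : ℚ⟦X⟧) ≤ gfCoeff t m := by
  rw [gfCoeff_eq_coeff_prod]
  refine coeff_prod_le_of_subset (Icc_subset_Icc_right hnm)
    (fun k _ => pow_mem (invOneSubXPow_mem_nonnegCoeffSubmonoid _) _) fun k _ => ?_
  rw [map_pow, constantCoeff_invOneSubXPow, one_pow]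

theorem prod_Icc_one_two_invOneSubXPow (t : ℕ) :
    ∏ k ∈ Icc 1 2, invOneSubXPow (k ^ t) ^ k.totient = (PowerSeries.mk 1 * invOneSubXPow (2 ^ t) : ℚ⟦X⟧) := by
  rw [show Icc 1 2 = {1, 2} by rfl, prod_pair (by norm_num)]
  simp

theorem gfCoeff_eq_one (h1 : 1 ≤ m) (hm : m < 2 ^ t) : gfCoeff t m = 1 := by
  rw [gfCoeff_eq_coeff_prod_of_lt_pow h1 hm]
  simp

theorem gfCoeff_eq_div_add_one (h2 : 2 ≤ m) (hm : m < 3 ^ t) :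
    gfCoeff t m = (m / 2 ^ t + 1 : ℕ) := by
  rw [gfCoeff_eq_coeff_prod_of_lt_pow h2 hm, prod_Icc_one_two_invOneSubXPow,
    coeff_mk_one_mul_invOneSubXPow]

theorem div_add_one_le_gfCoeff (h2 : 2 ≤ m) : ((m / 2 ^ t + 1 : ℕ) : ℚ) ≤ gfCoeff t m := by
  simpa only [prod_Icc_one_two_invOneSubXPow, coeff_mk_one_mul_invOneSubXPow] using
    coeff_prod_le_gfCoeff (t := t) h2

end GfCoeff

/-- For `t ≥ 2` and `μ_k = k^t`, the coefficient of `x^m` in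
`∏_{k ≥ 1}(1-x^{μ_k})^{-Φ(k)}` equals `1` for `1 ≤ m ≤ 2^t − 1`, equals `2` for
`2^t ≤ m ≤ 2^{t+1} − 1`, and is at least `3` for `m ≥ 2^{t+1}`. -/
theorem gf_coeff_values (t : ℕ) (ht : 2 ≤ t) :
    (∀ m : ℕ, 1 ≤ m → m ≤ 2 ^ t - 1 → gfCoeff t m = 1) ∧
    (∀ m : ℕ, 2 ^ t ≤ m → m ≤ 2 ^ (t + 1) - 1 → gfCoeff t m = 2) ∧
    (∀ m : ℕ, 2 ^ (t + 1) ≤ m → 3 ≤ gfCoeff t m) := by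
  have h4 : 4 ≤ 2 ^ t := by simpa using Nat.pow_le_pow_right two_pos ht
  have h23 : 2 ^ (t + 1) ≤ 3 ^ t := Nat.two_pow_succ_le_three_pow ht
  rw [pow_succ] at h23 ⊢
  refine ⟨fun m h1 hm => gfCoeff_eq_one h1 (by omega), fun m hlo hhi => ?_, fun m hm => ?_⟩
  · rw [gfCoeff_eq_div_add_one (by omega) (by omega), Nat.div_eq_of_lt_le (k := 1) (by omega) (by omega)]
    norm_num
  · have h2 : 2 ≤ m / 2 ^ t := (Nat.le_div_iff_mul_le (by omega)).mpr (by omega)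
    calc (3 : ℚ) ≤ (m / 2 ^ t + 1 : ℕ) := by exact_mod_cast Nat.succ_le_succ h2
      _ ≤ gfCoeff t m := div_add_one_le_gfCoeff (by omega)
end

section
/- Let p be prime, n ≥ 2, and consider skew-symmetric n×n matrices over ℤ/p under the congruence action D ↦ AᵀDA of GL(n, ℤ/p). The orbit of the standard rank-2 matrix D_n(1) (with 1 at position (2,1), -1 at (1,2), zeros elsewhere) has cardinality (p^{n-1} − 1)(p^n − 1)/(p² − 1). -/
/-!
With `E` the `2 × n` matrix of the first two standard basis vectors, `D_n(1) = Eᵀ J₂ E` is the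
alternating form `e₁ ∧ e₂`, and `Aᵀ (Mᵀ J₂ M) A = (M A)ᵀ J₂ (M A)`. As every linearly independent
pair of rows extends to an invertible matrix, the orbit is the set of forms `v ∧ w = Mᵀ J₂ M` with
`M` a `2 × n` matrix of rank `2`. Two such matrices `M`, `N` give the same form iff `N = g M` with
`det g = 1`, because `gᵀ J₂ g = (det g) J₂`. So each fibre is a copy of `SL₂(𝔽_p)`, and the
orbit has `(pⁿ - 1)(pⁿ - p) / (p³ - p)` elements.
-/

/-- The standard rank-2 skew-symmetric matrix `D_n(1)` over `ℤ/p`: entry `1` at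
position `(2,1)`, `-1` at position `(1,2)` (0-indexed: `(1,0)` and `(0,1)`),
zeros elsewhere. -/
def DnOne (n : ℕ) (p : ℕ) : Matrix (Fin n) (Fin n) (ZMod p) :=
  Matrix.of fun i j =>
    if (i : ℕ) = 1 ∧ (j : ℕ) = 0 then 1
    else if (i : ℕ) = 0 ∧ (j : ℕ) = 1 then -1
    else 0

open Matrix

theorem Nat.card_eq_card_range_mul {α β : Type*} [Finite α] {f : α → β} {k : ℕ}
    (h : ∀ a, Nat.card {a' // f a' = f a} = k) : Nat.card α = Nat.card (Set.range f) * k := by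
  have := Fintype.ofFinite (Set.range f)
  have hfiber (b : Set.range f) : Nat.card {a // Set.rangeFactorization f a = b} = k := by
    obtain ⟨_, a, rfl⟩ := b
    rw [← h a]
    exact Nat.card_congr (Equiv.subtypeEquivRight fun a' => Subtype.ext_iff)
  rw [← Nat.card_congr (Equiv.sigmaFiberEquiv (Set.rangeFactorization f)), Nat.card_sigma]
  simp [hfiber, Nat.card_eq_fintype_card]

section Wedge

abbrev Frame₂ (ι R : Type*) [Fintype ι] [CommRing R] :=
  {M : Matrix (Fin 2) ι R // ∃ X : Matrix ι (Fin 2) R, M * X = 1}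

variable (R : Type*) [CommRing R]

def J₂ : Matrix (Fin 2) (Fin 2) R := !![0, -1; 1, 0]

variable {R} {ι : Type*}

/-- The alternating matrix `v ∧ w = w vᵀ - v wᵀ` of the two rows `v, w` of `M`. -/
def wedge (M : Matrix (Fin 2) ι R) : Matrix ι ι R := Mᵀ * J₂ R * M

theorem J₂_mul_J₂ : J₂ R * J₂ R = -1 := by
  ext i j; fin_cases i <;> fin_cases j <;> simp [J₂]

theorem transpose_mul_J₂_mul (g : Matrix (Fin 2) (Fin 2) R) : gᵀ * J₂ R * g = g.det • J₂ R := by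
  ext i j
  fin_cases i <;> fin_cases j <;> simp [J₂, det_fin_two, mul_apply, Fin.sum_univ_two] <;> ring

theorem wedge_mul [Fintype ι] {κ : Type*} (M : Matrix (Fin 2) ι R) (A : Matrix ι κ R) :
    wedge (M * A) = Aᵀ * wedge M * A := by
  simp only [wedge, transpose_mul, Matrix.mul_assoc]

theorem wedge_mul_left (g : Matrix (Fin 2) (Fin 2) R) (M : Matrix (Fin 2) ι R) :
    wedge (g * M) = g.det • wedge M := by
  rw [wedge, wedge, transpose_mul, show Mᵀ * gᵀ * J₂ R * (g * M) = Mᵀ * (gᵀ * J₂ R * g) * M by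
    simp only [Matrix.mul_assoc], transpose_mul_J₂_mul, Matrix.mul_smul, Matrix.smul_mul]

theorem exists_eq_mul_of_wedge_eq [Fintype ι] {M N : Matrix (Fin 2) ι R} {Y : Matrix ι (Fin 2) R}
    (hY : N * Y = 1) (h : wedge N = wedge M) : ∃ g, N = g * M := by
  refine ⟨-(J₂ R * (M * Y)ᵀ * J₂ R), ?_⟩
  calc N = -(J₂ R * J₂ R * N) := by rw [J₂_mul_J₂, Matrix.neg_mul, Matrix.one_mul, neg_neg]
    _ = -(J₂ R * (N * Y)ᵀ * J₂ R * N) := by rw [hY, transpose_one, Matrix.mul_one]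
    _ = -(J₂ R * Yᵀ * wedge N) := by simp only [wedge, transpose_mul, Matrix.mul_assoc]
    _ = -(J₂ R * (M * Y)ᵀ * J₂ R) * M := by
      rw [h]; simp only [wedge, transpose_mul, Matrix.mul_assoc, Matrix.neg_mul]

theorem det_eq_one_of_wedge_mul_eq [Fintype ι] {M : Matrix (Fin 2) ι R} {X : Matrix ι (Fin 2) R}
    (hX : M * X = 1) {g : Matrix (Fin 2) (Fin 2) R} (h : wedge (g * M) = wedge M) :
    g.det = 1 := by
  have hJ : g.det • J₂ R = J₂ R :=
    calc g.det • J₂ R = wedge (g * M * X) := by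
          rw [Matrix.mul_assoc, hX, Matrix.mul_one, wedge, transpose_mul_J₂_mul]
      _ = wedge (M * X) := by rw [wedge_mul, h, ← wedge_mul]
      _ = J₂ R := by rw [hX, wedge, transpose_one, Matrix.one_mul, Matrix.mul_one]
  simpa [J₂] using congrFun (congrFun hJ 1) 0

theorem card_fiber_wedge [Fintype ι] (M : Frame₂ ι R) :
    Nat.card {N : Frame₂ ι R // wedge N.1 = wedge M.1} =
      Nat.card (SpecialLinearGroup (Fin 2) R) := by
  obtain ⟨M, X, hX⟩ := M
  have hrightInv (g : SpecialLinearGroup (Fin 2) R) :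
      (g : Matrix (Fin 2) (Fin 2) R) * M * (X * adjugate (g : Matrix (Fin 2) (Fin 2) R)) = 1 := by
    rw [Matrix.mul_assoc, ← Matrix.mul_assoc M, hX, Matrix.one_mul, mul_adjugate,
      Matrix.SpecialLinearGroup.det_coe, one_smul]
  have hwedge (g : SpecialLinearGroup (Fin 2) R) :
      wedge ((g : Matrix (Fin 2) (Fin 2) R) * M) = wedge M := by
    rw [wedge_mul_left, Matrix.SpecialLinearGroup.det_coe, one_smul]
  refine (Nat.card_congr (Equiv.ofBijective
    (fun g => ⟨⟨(g : Matrix (Fin 2) (Fin 2) R) * M, _, hrightInv g⟩, hwedge g⟩)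
    ⟨fun g g' hgg' => ?_, fun ⟨⟨N, Y, hY⟩, hN⟩ => ?_⟩)).symm
  · have hgM : (g : Matrix (Fin 2) (Fin 2) R) * M = (g' : Matrix (Fin 2) (Fin 2) R) * M :=
      congrArg (·.1.1) hgg'
    exact Subtype.ext <| by
      simpa only [Matrix.mul_assoc, hX, Matrix.mul_one] using congrArg (· * X) hgM
  · obtain ⟨g, rfl⟩ := exists_eq_mul_of_wedge_eq hY hN
    exact ⟨⟨g, det_eq_one_of_wedge_mul_eq hX hN⟩, rfl⟩

end Wedge

section StdFrame

variable {k n : ℕ}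

def stdFrame (R : Type*) [Zero R] [One R] (h : k ≤ n) : Matrix (Fin k) (Fin n) R :=
  (1 : Matrix (Fin n) (Fin n) R).submatrix (Fin.castLE h) id

variable {R : Type*} [Semiring R]

theorem stdFrame_mul (h : k ≤ n) {m : Type*} (A : Matrix (Fin n) m R) :
    stdFrame R h * A = A.submatrix (Fin.castLE h) id := by
  ext i j
  simp [stdFrame, mul_apply, one_apply]

theorem stdFrame_mul_transpose (h : k ≤ n) : stdFrame R h * (stdFrame R h)ᵀ = 1 := by
  rw [stdFrame_mul, stdFrame, transpose_submatrix, transpose_one, submatrix_submatrix]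
  exact submatrix_one _ (Fin.castLE_injective h)

end StdFrame

theorem DnOne_eq_wedge_stdFrame {p n : ℕ} (hn : 2 ≤ n) :
    DnOne n p = wedge (stdFrame (ZMod p) hn) := by
  ext i j
  simp only [DnOne, wedge, J₂, stdFrame, mul_apply, Fin.sum_univ_two, one_apply, Fin.ext_iff,
    of_apply, transpose_apply, submatrix_apply, id, Fin.val_castLE]
  split_ifs <;> simp_all

section Field

variable {K : Type*} [Field K]

theorem Matrix.linearIndependent_row_iff_exists_mul_eq_one {m n : Type*} [Fintype m]
    [DecidableEq m] [Fintype n] {M : Matrix m n K} :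
    LinearIndependent K M.row ↔ ∃ X : Matrix n m K, M * X = 1 := by
  refine ⟨fun h => ?_, fun ⟨X, hX⟩ => ?_⟩
  · rw [← mulVec_surjective_iff_exists_right_inverse, ← coe_mulVecLin, ← LinearMap.range_eq_top]
    refine Submodule.eq_top_of_finrank_eq ?_
    rw [← rank, h.rank_matrix, Module.finrank_fintype_fun_eq_card]
  · refine vecMul_injective_iff.mp fun v w hvw => ?_
    simpa [vecMul_vecMul, hX] using congrArg (· ᵥ* X) hvw

theorem Matrix.card_SL_mul_card_sub_one {ι : Type*} [Fintype ι] [DecidableEq ι] [Nonempty ι] :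
    Nat.card (SpecialLinearGroup ι K) * (Nat.card K - 1) = Nat.card (GL ι K) := by
  have hSL : Nat.card (SpecialLinearGroup ι K) =
      Nat.card (GeneralLinearGroup.det : GL ι K →* Kˣ).ker := by
    rw [← Nat.card_range_of_injective SpecialLinearGroup.toGL_injective,
      SpecialLinearGroup.range_toGL]
    rfl
  rw [hSL, ← (GeneralLinearGroup.det : GL ι K →* Kˣ).ker.card_mul_index, Subgroup.index_ker,
    MonoidHom.range_eq_top.mpr GeneralLinearGroup.det_surjective, Subgroup.card_top,
    Nat.card_units]

theorem exists_GL_submatrix_castLE_eq {k n : ℕ} (h : k ≤ n) {M : Matrix (Fin k) (Fin n) K}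
    (hM : LinearIndependent K M.row) :
    ∃ A : GL (Fin n) K, (A : Matrix (Fin n) (Fin n) K).submatrix (Fin.castLE h) id = M := by
  have extend (m : ℕ) (hkm : k ≤ m) (hmn : m ≤ n) :
      ∃ u : Fin m → Fin n → K, LinearIndependent K u ∧ ∀ i, u (Fin.castLE hkm i) = M i := by
    induction m, hkm using Nat.le_induction with
    | base => exact ⟨M, hM, fun i => rfl⟩
    | succ m hkm ih =>
      obtain ⟨u, hu, huM⟩ := ih (by omega)
      obtain ⟨x, hx⟩ := exists_linearIndependent_snoc_of_lt_finrank hu (by simpa using hmn)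
      exact ⟨Fin.snoc u x, hx, fun i =>
        (Fin.snoc_castSucc (α := fun _ => Fin n → K) _ _ _).trans (huM i)⟩
  obtain ⟨u, hu, huM⟩ := extend n h le_rfl
  have hunit : IsUnit (of u).det :=
    (isUnit_iff_isUnit_det _).mp (linearIndependent_rows_iff_isUnit.mp hu)
  exact ⟨GeneralLinearGroup.mk'' (of u) hunit, ext fun i j => congrFun (huM i) j⟩

theorem setOf_congr_wedge_stdFrame_eq_range_wedge {n : ℕ} (hn : 2 ≤ n) :
    {D : Matrix (Fin n) (Fin n) K | ∃ A : GL (Fin n) K,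
        D = (A : Matrix (Fin n) (Fin n) K)ᵀ * wedge (stdFrame K hn) *
          (A : Matrix (Fin n) (Fin n) K)} =
      Set.range fun M : Frame₂ (Fin n) K => wedge M.1 := by
  ext D
  constructor
  · rintro ⟨A, rfl⟩
    refine ⟨⟨stdFrame K hn * (A : Matrix (Fin n) (Fin n) K),
      (↑A⁻¹ : Matrix (Fin n) (Fin n) K) * (stdFrame K hn)ᵀ, ?_⟩, wedge_mul _ _⟩
    rw [Matrix.mul_assoc, ← Matrix.mul_assoc (A : Matrix (Fin n) (Fin n) K),
      Units.mul_inv, Matrix.one_mul, stdFrame_mul_transpose]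
  · rintro ⟨⟨M, hM⟩, rfl⟩
    obtain ⟨A, hA⟩ := exists_GL_submatrix_castLE_eq hn
      (linearIndependent_row_iff_exists_mul_eq_one.mpr hM)
    exact ⟨A, by rw [← wedge_mul, stdFrame_mul, hA]⟩

variable [Fintype K]

theorem card_frame₂ {ι : Type*} [Fintype ι] (hι : 2 ≤ Fintype.card ι) :
    (Nat.card (Frame₂ ι K) : ℚ) = ((Fintype.card K : ℚ) ^ Fintype.card ι - 1) *
      ((Fintype.card K : ℚ) ^ Fintype.card ι - Fintype.card K) := by
  have hq : 1 ≤ Fintype.card K := Fintype.card_pos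
  have hrank2 : Nat.card {M : Matrix (Fin 2) ι K // LinearIndependent K M.row} =
      ∏ i : Fin 2, (Fintype.card K ^ Module.finrank K (ι → K) - Fintype.card K ^ (i : ℕ)) :=
    card_linearIndependent (by simpa using hι)
  rw [← Nat.card_congr
      (Equiv.subtypeEquivRight fun M => linearIndependent_row_iff_exists_mul_eq_one), hrank2,
    Module.finrank_fintype_fun_eq_card, Fin.prod_univ_two, Fin.val_zero, Fin.val_one,
    pow_zero, pow_one, Nat.cast_mul, Nat.cast_sub (Nat.one_le_pow _ _ hq),
    Nat.cast_sub (Nat.le_self_pow (by omega) _)]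
  push_cast
  ring

theorem card_SL_two :
    (Nat.card (SpecialLinearGroup (Fin 2) K) : ℚ) =
      Fintype.card K * ((Fintype.card K : ℚ) ^ 2 - 1) := by
  have hq : 2 ≤ Fintype.card K := Fintype.one_lt_card
  have h := card_SL_mul_card_sub_one (ι := Fin 2) (K := K)
  rw [card_GL_field, Nat.card_eq_fintype_card (α := K), Fin.prod_univ_two, Fin.val_zero,
    Fin.val_one, pow_zero, pow_one] at h
  qify [Nat.one_le_pow 2 (Fintype.card K) (by omega), Nat.le_self_pow two_ne_zero (Fintype.card K),
    (by omega : 1 ≤ Fintype.card K)] at h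
  have hq1 : (Fintype.card K : ℚ) - 1 ≠ 0 :=
    sub_ne_zero.mpr (by exact_mod_cast (show Fintype.card K ≠ 1 by omega))
  exact mul_right_cancel₀ hq1 (by linear_combination h)

theorem card_range_wedge {ι : Type*} [Fintype ι] (hι : 2 ≤ Fintype.card ι) :
    (Nat.card (Set.range fun M : Frame₂ ι K => wedge M.1) : ℚ) =
      ((Fintype.card K : ℚ) ^ (Fintype.card ι - 1) - 1) *
        ((Fintype.card K : ℚ) ^ Fintype.card ι - 1) / ((Fintype.card K : ℚ) ^ 2 - 1) := by
  have hfib : (Nat.card (Frame₂ ι K) : ℚ) = Nat.card (Set.range fun M : Frame₂ ι K => wedge M.1) *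
      Nat.card (SpecialLinearGroup (Fin 2) K) := by
    exact_mod_cast Nat.card_eq_card_range_mul card_fiber_wedge
  rw [card_frame₂ hι, card_SL_two] at hfib
  have hq : (2 : ℚ) ≤ Fintype.card K := by exact_mod_cast Fintype.one_lt_card (α := K)
  set q : ℚ := (Fintype.card K : ℚ)
  have hqn : q ^ Fintype.card ι = q * q ^ (Fintype.card ι - 1) := by
    rw [← pow_succ', Nat.sub_add_cancel (by omega)]
  rw [eq_div_iff (by nlinarith)]
  refine mul_left_cancel₀ (by positivity : q ≠ 0) ?_
  linear_combination -hfib + (q ^ Fintype.card ι - 1) * hqn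

end Field

/-- For `p` prime and `n ≥ 2`, the orbit of `D_n(1)` under the congruence action
`D ↦ Aᵀ D A` of `GL(n, ℤ/p)` has cardinality `(p^{n-1} − 1)(p^n − 1)/(p² − 1)`. -/
theorem card_orbit_DnOne (p n : ℕ) (hp : Nat.Prime p) (hn : 2 ≤ n) :
    (Nat.card {D' : Matrix (Fin n) (Fin n) (ZMod p) |
        ∃ A : Matrix.GeneralLinearGroup (Fin n) (ZMod p),
          D' = Matrix.transpose (A : Matrix (Fin n) (Fin n) (ZMod p)) * DnOne n p *
            (A : Matrix (Fin n) (Fin n) (ZMod p))} : ℚ) =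
      ((p : ℚ) ^ (n - 1) - 1) * ((p : ℚ) ^ n - 1) / ((p : ℚ) ^ 2 - 1) := by
  have : Fact p.Prime := ⟨hp⟩
  rw [DnOne_eq_wedge_stdFrame hn, setOf_congr_wedge_stdFrame_eq_range_wedge hn,
    card_range_wedge (by simpa using hn), ZMod.card, Fintype.card_fin]
end
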